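/- Characterization of k-positivity (Terhal–Horodecki): let Λ be a linear map on d×d complex matrices that preserves Hermitian adjoints (Λ(X†) = Λ(X)† for all X), and let 1 ≤ k ≤ d. Then Λ is k-positive — i.e. (1_k⊗Λ)(M) is positive semidefinite for every positive semidefinite matrix M indexed by Fin k × Fin d — if and only if Re⟨φ, (1⊗Λ)(P₊)·φ⟩ ≥ 0 for every vector φ : Fin d × Fin d → ℂ of Schmidt rank at most k. -/

import Mathlib

open Matrix Kronecker BigOperators
open scoped ComplexOrder

noncomputable section

/-- `d × d` complex matrices. -/
abbrev Mat (d : ℕ) := Matrix (Fin d) (Fin d) ℂ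

/-- Matrices on `ℂ^d ⊗ ℂ^d`, indexed by `Fin d × Fin d`. -/
abbrev Mat2 (d : ℕ) := Matrix (Fin d × Fin d) (Fin d × Fin d) ℂ

/-- Partial transpose on Bob's system: `(M^{T_B})_{(i,k),(j,l)} = M_{(i,l),(j,k)}`. -/
def ptB {d : ℕ} (M : Mat2 d) : Mat2 d :=
  Matrix.of fun p q => M (p.1, q.2) (q.1, p.2)

/-- Schmidt rank of a vector `ψ : Fin d × Fin d → ℂ`: the rank of the `d × d`
matrix with `(i,j)` entry `ψ (i,j)`. -/
def schmidtRank {d : ℕ} (ψ : Fin d × Fin d → ℂ) : ℕ :=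
  (Matrix.of fun i j => ψ (i, j) : Mat d).rank

/-- A state: positive semidefinite with trace one. -/
def IsState {d : ℕ} (ρ : Mat2 d) : Prop := ρ.PosSemidef ∧ ρ.trace = 1

/-- One-distillability: some Schmidt-rank-≤2 vector has negative expectation on `ρ^{T_B}`. -/
def OneDistillable {d : ℕ} (ρ : Mat2 d) : Prop :=
  ∃ ψ : Fin d × Fin d → ℂ, schmidtRank ψ ≤ 2 ∧
    (star ψ ⬝ᵥ (ptB ρ).mulVec ψ).re < 0

/-- The rank-one matrix `|ψ⟩⟨ψ|`, with entries `ψ x * conj (ψ y)`. -/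
def outer {d : ℕ} (ψ : Fin d × Fin d → ℂ) : Mat2 d :=
  Matrix.vecMulVec ψ (star ψ)

/-- The maximally entangled projector `P₊`, `(P₊)_{(i,k),(j,l)} = (1/d)·δ_{ik}·δ_{jl}`. -/
def Pplus (d : ℕ) : Mat2 d :=
  Matrix.of fun p q =>
    ((if p.1 = p.2 then (1 : ℂ) else 0) * (if q.1 = q.2 then (1 : ℂ) else 0)) / d

/-- The flip operator `V_{(i,k),(j,l)} = δ_{il}·δ_{jk}`. -/
def flipOp (d : ℕ) : Mat2 d :=
  Matrix.of fun p q => if p.1 = q.2 ∧ q.1 = p.2 then (1 : ℂ) else 0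

/-- The operator `Z = Σ_i |ii⟩⟨ii|`, `Z_{(i,k),(j,l)} = δ_{ik}·δ_{jl}·δ_{ij}`. -/
def Zop (d : ℕ) : Mat2 d :=
  Matrix.of fun p q => if p.1 = p.2 ∧ q.1 = q.2 ∧ p.1 = q.1 then (1 : ℂ) else 0

/-- Partial trace over Alice: `(Tr_A M)_{k,l} = Σ_i M_{(i,k),(i,l)}`. -/
def trA {d : ℕ} (M : Mat2 d) : Mat d :=
  Matrix.of fun k l => ∑ i, M (i, k) (i, l)

/-- Alice's reduced state: `(ρ_A)_{i,j} = Σ_k ρ_{(i,k),(j,k)}`. -/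
def redA {d : ℕ} (ρ : Mat2 d) : Mat d :=
  Matrix.of fun i j => ∑ k, ρ (i, k) (j, k)

/-- Bob's reduced state: `(ρ_B)_{k,l} = Σ_i ρ_{(i,k),(i,l)}`. -/
def redB {d : ℕ} (ρ : Mat2 d) : Mat d := trA ρ

/-- `(1 ⊗ Λ)(M)`, acting with `Λ` on Bob's blocks. -/
def idTensor {d : ℕ} (Λ : Mat d → Mat d) (M : Mat2 d) : Mat2 d :=
  Matrix.of fun p q => Λ (Matrix.of fun k l => M (p.1, k) (q.1, l)) p.2 q.2

/-- `(Λ ⊗ 1)(M)`, acting with `Λ` on Alice's blocks. -/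
def tensorId {d : ℕ} (Λ : Mat d → Mat d) (M : Mat2 d) : Mat2 d :=
  Matrix.of fun p q => Λ (Matrix.of fun i j => M (i, p.2) (j, q.2)) p.1 q.1

/-- `(1_k ⊗ Λ)(M)` for `M` indexed by `Fin k × Fin d`. -/
def idTensorK {d : ℕ} (k : ℕ) (Λ : Mat d → Mat d)
    (M : Matrix (Fin k × Fin d) (Fin k × Fin d) ℂ) :
    Matrix (Fin k × Fin d) (Fin k × Fin d) ℂ :=
  Matrix.of fun p q => Λ (Matrix.of fun m n => M (p.1, m) (q.1, n)) p.2 q.2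

/-- Two-decomposable maps: `Λ(X) = Σᵢ Vᵢ · Xᵀ · Vᵢ†` with each `Vᵢ` of rank at most 2. -/
def TwoDecomposable {d : ℕ} (Λ : Mat d → Mat d) : Prop :=
  ∃ (n : ℕ) (V : Fin n → Mat d), (∀ i, (V i).rank ≤ 2) ∧
    ∀ X : Mat d, Λ X = ∑ i, V i * Xᵀ * (V i)ᴴ

/-- The diagonal part of a matrix (off-diagonal entries set to zero). -/
def diagPart {d : ℕ} (X : Mat d) : Mat d := Matrix.diagonal fun i => X i i


/-! Let `Ω = maxEntVec d = Σᵢ |ii⟩`, so that `P₊ = Ω Ω† / d`. A vector `w ∈ ℂ^k ⊗ ℂ^d` with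
coefficient matrix `W` is `(W ⊗ 1) Ω`, and `1_k ⊗ Λ` commutes with conjugation by `W ⊗ 1`; hence the
Choi form of `Λ` at `φ = (Wᴴ ⊗ 1) u` is `1/d` times the form of `(1_k ⊗ Λ)(w w†)` at `u`. The
vectors `(V ⊗ 1) u` with `V` a `d × k` matrix are exactly those of Schmidt rank at most `k`, and
every positive semidefinite `M` is a sum of rank-one matrices `w w†`, so both implications reduce
to this identity. -/

theorem Complex.re_inv_natCast_mul (d : ℕ) (z : ℂ) : ((d : ℂ)⁻¹ * z).re = (d : ℝ)⁻¹ * z.re := by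
  simp [Complex.mul_re]

theorem Matrix.exists_eq_mul_of_rank_le {K m n : Type*} [Field K] [Fintype n] [DecidableEq n]
    {k : ℕ} {A : Matrix m n K} (h : A.rank ≤ k) :
    ∃ (B : Matrix m (Fin k) K) (C : Matrix (Fin k) n K), A = B * C := by
  set W := LinearMap.range A.mulVecLin
  obtain ⟨j, hj⟩ : ∃ j : W →ₗ[K] Fin k → K, Function.Injective j := by
    rw [← finrank_le_iff_exists_linearMap, Module.finrank_fin_fun]
    exact h
  obtain ⟨g, hg⟩ := j.exists_leftInverse_of_injective (LinearMap.ker_eq_bot.mpr hj)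
  refine ⟨LinearMap.toMatrix' (W.subtype ∘ₗ g),
    LinearMap.toMatrix' (j ∘ₗ A.mulVecLin.rangeRestrict), Matrix.toLin'.injective ?_⟩
  rw [Matrix.toLin'_mul, Matrix.toLin'_toMatrix', Matrix.toLin'_toMatrix', LinearMap.comp_assoc,
    ← LinearMap.comp_assoc _ j g, hg, LinearMap.id_comp, Matrix.toLin'_apply']
  rfl

section StarRing

variable {R m n : Type*} [CommSemiring R] [StarRing R] [Fintype n]

theorem Matrix.vecMulVec_mulVec_star_mulVec (A : Matrix m n R) (x : n → R) :
    vecMulVec (A *ᵥ x) (star (A *ᵥ x)) = A * vecMulVec x (star x) * Aᴴ := by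
  rw [mul_vecMulVec, vecMulVec_mul, star_mulVec]

theorem Matrix.star_dotProduct_mul_mul_conjTranspose_mulVec [Fintype m] (A : Matrix m n R)
    (N : Matrix n n R) (u : m → R) :
    star u ⬝ᵥ (A * N * Aᴴ) *ᵥ u = star (Aᴴ *ᵥ u) ⬝ᵥ N *ᵥ (Aᴴ *ᵥ u) := by
  rw [← mulVec_mulVec, ← mulVec_mulVec, dotProduct_mulVec, star_mulVec,
    conjTranspose_conjTranspose]

end StarRing

theorem Matrix.kronecker_one_mulVec_apply {R ι κ n : Type*} [Semiring R] [Fintype κ] [Fintype n]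
    [DecidableEq n] (A : Matrix ι κ R) (u : κ × n → R) (p : ι × n) :
    ((A ⊗ₖ (1 : Matrix n n R)) *ᵥ u) p = ∑ r, A p.1 r * u (r, p.2) := by
  simp [mulVec, dotProduct, kroneckerMap_apply, one_apply, Fintype.sum_prod_type]

theorem Matrix.kronecker_one_mul_mul_conjTranspose_apply {R ι κ n : Type*} [CommSemiring R]
    [StarRing R] [Fintype κ] [Fintype n] [DecidableEq n] (A : Matrix ι κ R)
    (X : Matrix (κ × n) (κ × n) R) (p q : ι × n) :
    ((A ⊗ₖ (1 : Matrix n n R)) * X * (A ⊗ₖ (1 : Matrix n n R))ᴴ) p q =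
      ∑ a, ∑ b, A p.1 a * X (a, p.2) (b, q.2) * star (A q.1 b) := by
  simp only [mul_apply, kroneckerMap_apply, one_apply, mul_ite, mul_one, mul_zero, ite_mul,
    zero_mul, Fintype.sum_prod_type, Finset.sum_ite_eq, Finset.mem_univ, ↓reduceIte,
    conjTranspose_apply, apply_ite star, star_zero, Finset.sum_mul]
  rw [Finset.sum_comm]

variable {d k l : ℕ}

theorem schmidtRank_le_iff {φ : Fin d × Fin d → ℂ} :
    schmidtRank φ ≤ k ↔
      ∃ (V : Matrix (Fin d) (Fin k) ℂ) (u : Fin k × Fin d → ℂ), φ = (V ⊗ₖ (1 : Mat d)) *ᵥ u := by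
  have matrix_eq (V : Matrix (Fin d) (Fin k) ℂ) (u : Fin k × Fin d → ℂ) :
      (of fun i j => ((V ⊗ₖ (1 : Mat d)) *ᵥ u) (i, j)) = V * of fun r m => u (r, m) := by
    ext i j
    simp [kronecker_one_mulVec_apply, mul_apply]
  constructor
  · intro h
    obtain ⟨V, C, hVC⟩ := exists_eq_mul_of_rank_le h
    refine ⟨V, fun p => C p.1 p.2, funext fun p => ?_⟩
    simpa [kronecker_one_mulVec_apply, mul_apply] using congrFun (congrFun hVC p.1) p.2
  · rintro ⟨V, u, rfl⟩
    rw [schmidtRank, matrix_eq]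
    exact (rank_mul_le_left _ _).trans (rank_le_width _)

theorem idTensor_eq_idTensorK (Λ : Mat d → Mat d) (M : Mat2 d) :
    idTensor Λ M = idTensorK d Λ M :=
  rfl

theorem idTensorK_sum {ι : Type*} (Λ : Mat d →ₗ[ℂ] Mat d) (s : Finset ι)
    (M : ι → Matrix (Fin k × Fin d) (Fin k × Fin d) ℂ) :
    idTensorK k Λ (∑ t ∈ s, M t) = ∑ t ∈ s, idTensorK k Λ (M t) := by
  ext p q
  have blocks : (of fun m n => ∑ t ∈ s, M t (p.1, m) (q.1, n)) =
      ∑ t ∈ s, of fun m n => M t (p.1, m) (q.1, n) := by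
    ext; simp [Matrix.sum_apply]
  simp only [idTensorK, of_apply, Matrix.sum_apply]
  rw [blocks, map_sum, Matrix.sum_apply]

theorem idTensorK_smul (Λ : Mat d →ₗ[ℂ] Mat d) (c : ℂ)
    (M : Matrix (Fin k × Fin d) (Fin k × Fin d) ℂ) :
    idTensorK k Λ (c • M) = c • idTensorK k Λ M := by
  ext p q
  exact congrFun (congrFun (map_smul Λ c _) p.2) q.2

theorem isHermitian_idTensorK {Λ : Mat d →ₗ[ℂ] Mat d} (hΛ : ∀ X : Mat d, Λ Xᴴ = (Λ X)ᴴ)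
    {M : Matrix (Fin k × Fin d) (Fin k × Fin d) ℂ} (hM : M.IsHermitian) :
    (idTensorK k Λ M).IsHermitian := by
  ext p q
  have block : (of fun m n => M (q.1, m) (p.1, n))ᴴ = of fun m n => M (p.1, m) (q.1, n) := by
    ext m n
    simpa using congrFun (congrFun hM (p.1, m)) (q.1, n)
  simp only [idTensorK, conjTranspose_apply, of_apply]
  rw [← block, hΛ, conjTranspose_apply]

theorem idTensorK_kronecker_one_conj (Λ : Mat d →ₗ[ℂ] Mat d) (A : Matrix (Fin k) (Fin l) ℂ)
    (M : Matrix (Fin l × Fin d) (Fin l × Fin d) ℂ) :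
    idTensorK k Λ ((A ⊗ₖ (1 : Mat d)) * M * (A ⊗ₖ (1 : Mat d))ᴴ) =
      (A ⊗ₖ (1 : Mat d)) * idTensorK l Λ M * (A ⊗ₖ (1 : Mat d))ᴴ := by
  ext p q
  have block : (of fun m n => ∑ a, ∑ b, A p.1 a * M (a, m) (b, n) * star (A q.1 b)) =
      ∑ a, ∑ b, (A p.1 a * star (A q.1 b)) • of fun m n => M (a, m) (b, n) := by
    ext m n
    simp only [of_apply, Matrix.sum_apply, Matrix.smul_apply, smul_eq_mul]
    exact Finset.sum_congr rfl fun _ _ => Finset.sum_congr rfl fun _ _ => by ring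
  simp only [idTensorK, of_apply, kronecker_one_mul_mul_conjTranspose_apply]
  rw [block]
  simp only [map_sum, map_smul, Matrix.sum_apply, Matrix.smul_apply, smul_eq_mul]
  exact Finset.sum_congr rfl fun _ _ => Finset.sum_congr rfl fun _ _ => by ring

def maxEntVec (d : ℕ) : Fin d × Fin d → ℂ := fun p => if p.1 = p.2 then 1 else 0

theorem Pplus_eq_smul_vecMulVec :
    Pplus d = (d : ℂ)⁻¹ • vecMulVec (maxEntVec d) (star (maxEntVec d)) := by
  ext p q
  simp [Pplus, maxEntVec, vecMulVec_apply, div_eq_inv_mul, apply_ite (starRingEnd ℂ)]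

theorem kronecker_one_mulVec_maxEntVec (W : Matrix (Fin k) (Fin d) ℂ) :
    (W ⊗ₖ (1 : Mat d)) *ᵥ maxEntVec d = fun p => W p.1 p.2 := by
  ext p
  simp [kronecker_one_mulVec_apply, maxEntVec]

theorem dotProduct_idTensor_Pplus_kronecker_one_mulVec (Λ : Mat d →ₗ[ℂ] Mat d)
    (W : Matrix (Fin k) (Fin d) ℂ) (u : Fin k × Fin d → ℂ) :
    star ((Wᴴ ⊗ₖ (1 : Mat d)) *ᵥ u) ⬝ᵥ idTensor Λ (Pplus d) *ᵥ ((Wᴴ ⊗ₖ (1 : Mat d)) *ᵥ u) =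
      (d : ℂ)⁻¹ * (star u ⬝ᵥ
        idTensorK k Λ (vecMulVec (fun p => W p.1 p.2) (star fun p => W p.1 p.2)) *ᵥ u) := by
  rw [← kronecker_one_mulVec_maxEntVec, vecMulVec_mulVec_star_mulVec, idTensorK_kronecker_one_conj,
    Pplus_eq_smul_vecMulVec, idTensor_eq_idTensorK, idTensorK_smul, smul_mulVec, dotProduct_smul, smul_eq_mul,
    star_dotProduct_mul_mul_conjTranspose_mulVec, conjTranspose_kronecker, conjTranspose_one]

theorem choi_nonneg_of_kPositive {Λ : Mat d →ₗ[ℂ] Mat d}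
    (hpos : ∀ M : Matrix (Fin k × Fin d) (Fin k × Fin d) ℂ, M.PosSemidef →
      (idTensorK k Λ M).PosSemidef)
    {φ : Fin d × Fin d → ℂ} (hφ : schmidtRank φ ≤ k) :
    0 ≤ (star φ ⬝ᵥ idTensor Λ (Pplus d) *ᵥ φ).re := by
  obtain ⟨V, u, rfl⟩ := schmidtRank_le_iff.mp hφ
  rw [← conjTranspose_conjTranspose V, dotProduct_idTensor_Pplus_kronecker_one_mulVec,
    Complex.re_inv_natCast_mul]
  exact mul_nonneg (by positivity)
    ((hpos _ (posSemidef_vecMulVec_self_star _)).re_dotProduct_nonneg u)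

theorem posSemidef_idTensorK_vecMulVec_of_choi_nonneg (hd : 0 < d) {Λ : Mat d →ₗ[ℂ] Mat d}
    (hΛ : ∀ X : Mat d, Λ Xᴴ = (Λ X)ᴴ)
    (hchoi : ∀ φ : Fin d × Fin d → ℂ, schmidtRank φ ≤ k →
      0 ≤ (star φ ⬝ᵥ idTensor Λ (Pplus d) *ᵥ φ).re)
    (w : Fin k × Fin d → ℂ) :
    (idTensorK k Λ (vecMulVec w (star w))).PosSemidef := by
  have hN := isHermitian_idTensorK hΛ (posSemidef_vecMulVec_self_star w).isHermitian
  refine .of_dotProduct_mulVec_nonneg hN fun u => ?_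
  have hre := hchoi _ (schmidtRank_le_iff.mpr ⟨(of fun r a => w (r, a))ᴴ, u, rfl⟩)
  rw [dotProduct_idTensor_Pplus_kronecker_one_mulVec, Complex.re_inv_natCast_mul] at hre
  exact Complex.nonneg_iff.mpr ⟨nonneg_of_mul_nonneg_right hre (by positivity),
    (hN.im_star_dotProduct_mulVec_self u).symm⟩

theorem kPositive_iff_choi_positive_on_schmidt_rank_general (d : ℕ) (hd : 2 ≤ d)
    (k : ℕ)
    (Λ : Mat d →ₗ[ℂ] Mat d) (hherm : ∀ X : Mat d, Λ Xᴴ = (Λ X)ᴴ) :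
    (∀ M : Matrix (Fin k × Fin d) (Fin k × Fin d) ℂ, M.PosSemidef →
        (idTensorK k (⇑Λ) M).PosSemidef) ↔
      ∀ φ : Fin d × Fin d → ℂ, schmidtRank φ ≤ k →
        0 ≤ (star φ ⬝ᵥ (idTensor (⇑Λ) (Pplus d)).mulVec φ).re := by
  refine ⟨fun hpos φ hφ => choi_nonneg_of_kPositive hpos hφ, fun hchoi M hM => ?_⟩
  obtain ⟨m, v, rfl⟩ := posSemidef_iff_eq_sum_vecMulVec.mp hM
  rw [idTensorK_sum]
  exact posSemidef_sum _ fun i _ =>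
    posSemidef_idTensorK_vecMulVec_of_choi_nonneg (by omega) hherm hchoi (v i)

/-- Terhal–Horodecki: a Hermiticity-preserving linear map is
`k`-positive iff its Choi–Jamiołkowski operator is positive on all vectors of
Schmidt rank at most `k`. -/
theorem kPositive_iff_choi_positive_on_schmidt_rank (d : ℕ) (hd : 2 ≤ d)
    (k : ℕ) (hk1 : 1 ≤ k) (hkd : k ≤ d)
    (Λ : Mat d →ₗ[ℂ] Mat d) (hherm : ∀ X : Mat d, Λ Xᴴ = (Λ X)ᴴ) :
    (∀ M : Matrix (Fin k × Fin d) (Fin k × Fin d) ℂ, M.PosSemidef →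
        (idTensorK k (⇑Λ) M).PosSemidef) ↔
      ∀ φ : Fin d × Fin d → ℂ, schmidtRank φ ≤ k →
        0 ≤ (star φ ⬝ᵥ (idTensor (⇑Λ) (Pplus d)).mulVec φ).re :=
  kPositive_iff_choi_positive_on_schmidt_rank_general d hd k Λ hherm
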